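/- arXiv:2209.01736 — 3 statements merged into one kernel-verified Lean document; each statement's English description precedes it below -/
import Mathlib

section
/- Let Δt > 0 and g ∈ ℝ. Let X : ℝ² → ℝ² be a ℤ²-equivariant C¹ diffeomorphism with everywhere positive Jacobian determinant δ(x) = det DX(x). Let ρⁿ : ℝ² → ℝ be C² and ℤ²-periodic, and ρⁿ⁻¹ : ℝ² → ℝ be continuous and ℤ²-periodic, satisfying the modified characteristic scheme pointwise: ρⁿ(x) − ρⁿ⁻¹(X(x)) δ(x) = Δt ( Δρⁿ(x) + g ρⁿ(x)(1 − ρⁿ⁻¹(x)) ) for all x ∈ ℝ², where Δ denotes the Laplacian. Then the scheme conserves mass: ∫_Q ρⁿ(x) dx = ∫_Q ρⁿ⁻¹(x) dx + Δt ∫_Q g ρⁿ(x)(1 − ρⁿ⁻¹(x)) dx, where Q = [0,1]². -/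
open MeasureTheory

noncomputable section

abbrev E2 : Type := EuclideanSpace ℝ (Fin 2)

/-- The unit fundamental domain `Q = [0,1]²`. -/
def Q : Set E2 := {x | ∀ i, x i ∈ Set.Icc (0:ℝ) 1}

/-- The vector in `ℝ²` with integer coordinates `k`. -/
def intVec (k : Fin 2 → ℤ) : E2 := WithLp.toLp 2 (fun i => (k i : ℝ))

/-- The Laplacian `Δf = ∂₁₁ f + ∂₂₂ f` on `ℝ²`. -/
def lap (f : E2 → ℝ) (x : E2) : ℝ :=
  ∑ i, fderiv ℝ (fun y => fderiv ℝ f y (EuclideanSpace.single i (1:ℝ))) x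
    (EuclideanSpace.single i (1:ℝ))

/-!
Integrate the scheme over `Q`. The Laplacian term integrates to zero: by the divergence theorem
its integral is a sum of differences of integrals over opposite faces of the unit square, and
these cancel by periodicity. For the transport term, the change of variables `y = X x` turns
`∫_Q ρⁿ⁻¹(X x) δ(x) dx` into `∫_{X(Q)} ρⁿ⁻¹`; since `X` is `ℤ²`-equivariant, `X(Q)` is again a
fundamental domain of `ℤ²`, so this is `∫_Q ρⁿ⁻¹` by periodicity.
-/

open Set

theorem Fin.insertNth_eq_insertNth_zero_add_single {M : Type*} [AddZeroClass M] {n : ℕ}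
    (i : Fin (n + 1)) (a : M) (x : Fin n → M) :
    i.insertNth (α := fun _ => M) a x = i.insertNth (α := fun _ => M) 0 x + Pi.single i a := by
  ext j
  refine Fin.succAboveCases i ?_ (fun j => ?_) j <;> simp [Fin.succAbove_ne]

theorem integral_Icc_sum_fderiv_eq_zero_of_periodic {n : ℕ}
    (f : Fin (n + 1) → (Fin (n + 1) → ℝ) → ℝ) (hf : ∀ i, ContDiff ℝ 1 (f i))
    (hper : ∀ i x, f i (x + Pi.single i 1) = f i x) :
    ∫ x in Icc (0 : Fin (n + 1) → ℝ) 1, ∑ i, fderiv ℝ (f i) x (Pi.single i 1) = 0 := by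
  have hcont : Continuous fun x => ∑ i, fderiv ℝ (f i) x (Pi.single i 1) :=
    continuous_finsetSum _ fun i _ => ((hf i).continuous_fderiv one_ne_zero).clm_apply
      continuous_const
  rw [integral_divergence_of_hasFDerivAt_off_countable' 0 1 zero_le_one f
    (fun i => fderiv ℝ (f i)) ∅ countable_empty (fun i => (hf i).continuous.continuousOn)
    (fun x _ i => ((hf i).differentiable one_ne_zero x).hasFDerivAt)
    (hcont.continuousOn.integrableOn_compact isCompact_Icc)]
  refine Finset.sum_eq_zero fun i _ => sub_eq_zero.2 ?_
  simp only [Pi.one_apply, Pi.zero_apply, hper,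
    Fin.insertNth_eq_insertNth_zero_add_single _ (1 : ℝ)]

theorem existsUnique_vadd_mem_image {G α : Type*} [AddGroup G] [AddAction G α] {s : Set α}
    (hs : ∀ x, ∃! g : G, g +ᵥ x ∈ s) (e : α ≃ α) (he : ∀ (g : G) x, e (g +ᵥ x) = g +ᵥ e x)
    (x : α) : ∃! g : G, g +ᵥ x ∈ e '' s := by
  have he' : ∀ (g : G) x, e.symm (g +ᵥ x) = g +ᵥ e.symm x := fun g x =>
    e.symm_apply_eq.2 (by rw [he, e.apply_symm_apply])
  simpa only [e.image_eq_preimage_symm, mem_preimage, he'] using hs (e.symm x)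

theorem setIntegral_abs_det_smul_comp_eq_of_equivariant
    {E F G : Type*} [NormedAddCommGroup E] [NormedSpace ℝ E] [FiniteDimensional ℝ E]
    [MeasurableSpace E] [BorelSpace E] [NormedAddCommGroup F] [NormedSpace ℝ F]
    [AddGroup G] [AddAction G E] [Countable G] [MeasurableConstVAdd G E]
    (μ : Measure E) [μ.IsAddHaarMeasure] [VAddInvariantMeasure G E μ]
    {s : Set E} (hs : MeasurableSet s) (hs' : ∀ x, ∃! g : G, g +ᵥ x ∈ s)
    {X : E → E} {X' : E → E →L[ℝ] E} (hX : ∀ x, HasFDerivAt X (X' x) x)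
    (hXbij : Function.Bijective X) (hXequiv : ∀ (g : G) x, X (g +ᵥ x) = g +ᵥ X x)
    {f : E → F} (hf : ∀ (g : G) x, f (g +ᵥ x) = f x) :
    ∫ x in s, |(X' x).det| • f (X x) ∂μ = ∫ x in s, f x ∂μ := by
  have hX' : ∀ x ∈ s, HasFDerivWithinAt X (X' x) s x := fun x _ => (hX x).hasFDerivWithinAt
  have himage : IsAddFundamentalDomain G (X '' s) μ :=
    .mk' (measurable_image_of_fderivWithin hs hX' hXbij.injective.injOn).nullMeasurableSet
      (existsUnique_vadd_mem_image hs' (Equiv.ofBijective X hXbij) hXequiv)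
  rw [← integral_image_eq_integral_abs_det_fderiv_smul μ hs hX' hXbij.injective.injOn]
  exact himage.setIntegral_eq (.mk' hs.nullMeasurableSet hs') hf

def IntPeriodic {α : Type*} (f : E2 → α) : Prop :=
  ∀ (x : E2) (k : Fin 2 → ℤ), f (x + intVec k) = f x

def IntEquivariant (X : E2 → E2) : Prop :=
  ∀ (x : E2) (k : Fin 2 → ℤ), X (x + intVec k) = X x + intVec k

theorem IntPeriodic.fderiv {F : Type*} [NormedAddCommGroup F] [NormedSpace ℝ F] {f : E2 → F}
    (hf : IntPeriodic f) : IntPeriodic (fderiv ℝ f) := fun x k => by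
  rw [← fderiv_comp_add_right, funext fun y => hf y k]

/-- `ℤ²` enters as `span ℤ (range intBasis)`, the lattice of Mathlib's `ZSpan.fundamentalDomain`. -/
abbrev intBasis : Module.Basis (Fin 2) ℝ E2 := (EuclideanSpace.basisFun (Fin 2) ℝ).toBasis

theorem mem_span_intBasis_iff {v : E2} :
    v ∈ Submodule.span ℤ (range intBasis) ↔ ∃ k, intVec k = v := by
  simp only [Module.Basis.mem_span_iff_repr_mem, OrthonormalBasis.coe_toBasis_repr_apply,
    EuclideanSpace.basisFun_repr, algebraMap_int_eq, eq_intCast, mem_range]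
  constructor
  · intro h
    choose k hk using h
    exact ⟨k, by ext i; exact hk i⟩
  · rintro ⟨k, rfl⟩ i
    exact ⟨k i, rfl⟩

/-- Haar-invariance instances for translation by the lattice exist only for its `AddSubgroup`. -/
instance : Countable (Submodule.span ℤ (range intBasis)).toAddSubgroup :=
  inferInstanceAs (Countable (Submodule.span ℤ (range intBasis)))

theorem IntPeriodic.add_of_mem_span {α : Type*} {f : E2 → α} (hf : IntPeriodic f) {v : E2}
    (hv : v ∈ Submodule.span ℤ (range intBasis)) (x : E2) : f (v + x) = f x := by
  obtain ⟨k, rfl⟩ := mem_span_intBasis_iff.1 hv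
  rw [add_comm, hf]

theorem IntEquivariant.apply_add_of_mem_span {X : E2 → E2} (hX : IntEquivariant X) {v : E2}
    (hv : v ∈ Submodule.span ℤ (range intBasis)) (x : E2) : X (v + x) = v + X x := by
  obtain ⟨k, rfl⟩ := mem_span_intBasis_iff.1 hv
  rw [add_comm, hX, add_comm]

theorem Q_eq_preimage_Icc : Q = WithLp.ofLp ⁻¹' Icc (0 : Fin 2 → ℝ) 1 := by
  ext x
  simp [Q, Pi.le_def, forall_and]

theorem isCompact_Q : IsCompact Q := by
  rw [Q_eq_preimage_Icc]
  exact (EuclideanSpace.equiv (Fin 2) ℝ).toHomeomorph.isCompact_preimage.2 isCompact_Icc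

theorem setIntegral_Q_eq_setIntegral_Icc (f : E2 → ℝ) :
    ∫ x in Q, f x = ∫ y in Icc (0 : Fin 2 → ℝ) 1, f (WithLp.toLp 2 y) := by
  rw [Q_eq_preimage_Icc]
  exact (PiLp.volume_preserving_ofLp _).setIntegral_preimage_emb
    (EuclideanSpace.equiv (Fin 2) ℝ).toHomeomorph.measurableEmbedding
    (fun y => f (WithLp.toLp 2 y)) _

theorem fundamentalDomain_intBasis :
    ZSpan.fundamentalDomain intBasis = WithLp.ofLp ⁻¹' univ.pi fun _ => Ico (0 : ℝ) 1 := by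
  ext x
  simp [ZSpan.fundamentalDomain]

theorem Q_ae_eq_fundamentalDomain : Q =ᵐ[volume] ZSpan.fundamentalDomain intBasis := by
  rw [Q_eq_preimage_Icc, fundamentalDomain_intBasis]
  exact (PiLp.volume_preserving_ofLp _).quasiMeasurePreserving.preimage_ae_eq
    Measure.univ_pi_Ico_ae_eq_Icc.symm

theorem intVec_single (i : Fin 2) : intVec (Pi.single i 1) = WithLp.toLp 2 (Pi.single i 1) := by
  ext j
  simp [intVec, Pi.single_apply, apply_ite]

theorem integral_Q_sum_fderiv_eq_zero (f : Fin 2 → E2 → ℝ) (hf : ∀ i, ContDiff ℝ 1 (f i))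
    (hper : ∀ i, IntPeriodic (f i)) :
    ∫ x in Q, ∑ i, fderiv ℝ (f i) x (EuclideanSpace.single i 1) = 0 := by
  let e := (EuclideanSpace.equiv (Fin 2) ℝ).symm
  rw [setIntegral_Q_eq_setIntegral_Icc]
  convert integral_Icc_sum_fderiv_eq_zero_of_periodic (fun i => f i ∘ e)
    (fun i => (hf i).comp e.contDiff) fun i y => by
      simpa [e, intVec_single] using hper i (e y) (Pi.single i 1) using 4 with y _ i
  rw [e.comp_right_fderiv]
  rfl

theorem ContDiff.contDiff_fderiv_apply_const {E F : Type*} [NormedAddCommGroup E]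
    [NormedSpace ℝ E] [NormedAddCommGroup F] [NormedSpace ℝ F] {f : E → F}
    (hf : ContDiff ℝ 2 f) (v : E) :
    ContDiff ℝ 1 fun x => fderiv ℝ f x v :=
  (hf.fderiv_right le_rfl).clm_apply contDiff_const

theorem continuous_lap {f : E2 → ℝ} (hf : ContDiff ℝ 2 f) : Continuous (lap f) :=
  continuous_finsetSum _ fun _ _ =>
    ((hf.contDiff_fderiv_apply_const _).continuous_fderiv one_ne_zero).clm_apply continuous_const

theorem integral_Q_lap_eq_zero {f : E2 → ℝ} (hf : ContDiff ℝ 2 f) (hper : IntPeriodic f) :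
    ∫ x in Q, lap f x = 0 :=
  integral_Q_sum_fderiv_eq_zero _ (fun _ => hf.contDiff_fderiv_apply_const _) fun _ x k => by
    simp only [hper.fderiv x k]

theorem setIntegral_Q_comp_mul_det {X : E2 → E2} (hX : Differentiable ℝ X)
    (hXbij : Function.Bijective X) (hXequiv : IntEquivariant X)
    (hδ : ∀ x, 0 ≤ (fderiv ℝ X x).det) {f : E2 → ℝ} (hf : IntPeriodic f) :
    ∫ x in Q, f (X x) * (fderiv ℝ X x).det = ∫ x in Q, f x := by
  have hfd := ZSpan.fundamentalDomain_measurableSet intBasis (E := E2)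
  calc ∫ x in Q, f (X x) * (fderiv ℝ X x).det
      = ∫ x in ZSpan.fundamentalDomain intBasis, |(fderiv ℝ X x).det| • f (X x) := by
        rw [setIntegral_congr_set Q_ae_eq_fundamentalDomain]
        refine setIntegral_congr_fun hfd fun x _ => ?_
        rw [abs_of_nonneg (hδ x), smul_eq_mul, mul_comm]
    _ = ∫ x in ZSpan.fundamentalDomain intBasis, f x :=
        setIntegral_abs_det_smul_comp_eq_of_equivariant
          (G := (Submodule.span ℤ (range intBasis)).toAddSubgroup) volume hfd
          (fun x => ZSpan.exist_unique_vadd_mem_fundamentalDomain intBasis x)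
          (fun x => (hX x).hasFDerivAt) hXbij
          (fun g => hXequiv.apply_add_of_mem_span g.2)
          (fun g => hf.add_of_mem_span g.2)
    _ = ∫ x in Q, f x := setIntegral_congr_set Q_ae_eq_fundamentalDomain.symm

theorem mass_balance_modified_characteristic_scheme_general
    (Δt g : ℝ)
    (X : E2 → E2) (ρn ρn1 : E2 → ℝ)
    (hX : ContDiff ℝ 1 X) (hXbij : Function.Bijective X)
    (hXequiv : ∀ (x : E2) (k : Fin 2 → ℤ), X (x + intVec k) = X x + intVec k)
    (hδpos : ∀ x : E2, 0 < (fderiv ℝ X x).det)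
    (hρn : ContDiff ℝ 2 ρn)
    (hρnper : ∀ (x : E2) (k : Fin 2 → ℤ), ρn (x + intVec k) = ρn x)
    (hρn1 : Continuous ρn1)
    (hρn1per : ∀ (x : E2) (k : Fin 2 → ℤ), ρn1 (x + intVec k) = ρn1 x)
    (hscheme : ∀ x : E2,
      ρn x - ρn1 (X x) * (fderiv ℝ X x).det
        = Δt * (lap ρn x + g * ρn x * (1 - ρn1 x))) :
    ∫ x in Q, ρn x = (∫ x in Q, ρn1 x) + Δt * ∫ x in Q, g * ρn x * (1 - ρn1 x) := by
  have hδ : Continuous fun x => (fderiv ℝ X x).det :=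
    ContinuousLinearMap.continuous_det.comp (hX.continuous_fderiv one_ne_zero)
  have hXc : Continuous X := hX.continuous
  have hint {f : E2 → ℝ} (hf : Continuous f) : IntegrableOn f Q :=
    hf.continuousOn.integrableOn_compact isCompact_Q
  have hmass : (∫ x in Q, ρn x) - ∫ x in Q, ρn1 (X x) * (fderiv ℝ X x).det
      = Δt * ((∫ x in Q, lap ρn x) + ∫ x in Q, g * ρn x * (1 - ρn1 x)) := by
    rw [← integral_sub (hint hρn.continuous) (hint (by fun_prop)),
      ← integral_add (hint (continuous_lap hρn)) (hint (by fun_prop)), ← integral_const_mul]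
    exact integral_congr_ae (ae_of_all _ hscheme)
  rw [integral_Q_lap_eq_zero hρn hρnper, zero_add, setIntegral_Q_comp_mul_det
    (hX.differentiable one_ne_zero) hXbij hXequiv (fun x => (hδpos x).le) hρn1per] at hmass
  linarith

/-- Mass balance for the modified characteristic scheme: if
`ρⁿ(x) − ρⁿ⁻¹(X(x)) δ(x) = Δt (Δρⁿ(x) + g ρⁿ(x)(1 − ρⁿ⁻¹(x)))` pointwise, with `X` a
`ℤ²`-equivariant `C¹` diffeomorphism with positive Jacobian determinant `δ`, and `ρⁿ, ρⁿ⁻¹`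
`ℤ²`-periodic, then `∫_Q ρⁿ = ∫_Q ρⁿ⁻¹ + Δt ∫_Q g ρⁿ (1 − ρⁿ⁻¹)`. -/
theorem mass_balance_modified_characteristic_scheme
    (Δt g : ℝ) (hΔt : 0 < Δt)
    (X : E2 → E2) (ρn ρn1 : E2 → ℝ)
    (hX : ContDiff ℝ 1 X) (hXbij : Function.Bijective X)
    (hXequiv : ∀ (x : E2) (k : Fin 2 → ℤ), X (x + intVec k) = X x + intVec k)
    (hδpos : ∀ x : E2, 0 < (fderiv ℝ X x).det)
    (hρn : ContDiff ℝ 2 ρn)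
    (hρnper : ∀ (x : E2) (k : Fin 2 → ℤ), ρn (x + intVec k) = ρn x)
    (hρn1 : Continuous ρn1)
    (hρn1per : ∀ (x : E2) (k : Fin 2 → ℤ), ρn1 (x + intVec k) = ρn1 x)
    (hscheme : ∀ x : E2,
      ρn x - ρn1 (X x) * (fderiv ℝ X x).det
        = Δt * (lap ρn x + g * ρn x * (1 - ρn1 x))) :
    ∫ x in Q, ρn x = (∫ x in Q, ρn1 x) + Δt * ∫ x in Q, g * ρn x * (1 - ρn1 x) :=
  mass_balance_modified_characteristic_scheme_general Δt g X ρn ρn1 hX hXbij hXequiv hδpos hρn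
    hρnper hρn1 hρn1per hscheme
end
end

section
/- Let X : ℝ² → ℝ² be a ℤ²-equivariant C¹ diffeomorphism with positive Jacobian determinant δ(x) = det(DX(x)) satisfying δ(x) ≤ Λ for all x, for some constant Λ > 0. Let θ, η : ℝ² → ℝ be continuous and ℤ²-periodic. Then ∫_Q (η(x) − θ(X(x)) δ(x)) η(x) dx ≥ (1/2) ∫_Q η(x)² dx − (Λ/2) ∫_Q θ(y)² dy, where Q = [0,1]². -/
open MeasureTheory

noncomputable section

/-! Pointwise, Young's inequality and `0 < δ ≤ Λ` give
`(η - θ(X) δ) η ≥ η²/2 - δ² θ(X)²/2 ≥ η²/2 - (Λ/2) δ θ(X)²`.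
The change of variables `y = X x` turns `∫_Q δ θ(X)²` into `∫_{X(Q)} θ²`; since `X` is
`ℤ²`-equivariant, `X(Q)` is again a fundamental domain of `ℤ²`, so periodicity of `θ²` makes this
`∫_Q θ²`. -/

open Function

section ChangeOfVariables

variable {E V : Type*} [NormedAddCommGroup E] [NormedSpace ℝ E] [FiniteDimensional ℝ E]
  [MeasurableSpace E] [BorelSpace E] [NormedAddCommGroup V] [NormedSpace ℝ V]
  {μ : Measure E} [μ.IsAddHaarMeasure]

theorem quasiMeasurePreserving_symm_ofBijective_of_hasFDerivAt
    {X : E → E} {X' : E → E →L[ℝ] E} (hX' : ∀ x, HasFDerivAt X (X' x) x) (hX : Bijective X) :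
    Measure.QuasiMeasurePreserving (Equiv.ofBijective X hX).symm μ μ := by
  have hemb : MeasurableEmbedding X :=
    (continuous_iff_continuousAt.2 fun x => (hX' x).continuousAt).measurable.measurableEmbedding
      hX.injective
  have hpre : ∀ t, (Equiv.ofBijective X hX).symm ⁻¹' t = X '' t := fun t =>
    ((Equiv.ofBijective X hX).image_eq_preimage_symm t).symm
  have hmeas : Measurable (Equiv.ofBijective X hX).symm := fun t ht => by
    rw [hpre]; exact hemb.measurableSet_image' ht
  refine ⟨hmeas, Measure.AbsolutelyContinuous.mk fun t ht h0 => ?_⟩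
  rw [Measure.map_apply hmeas ht, hpre]
  exact addHaar_image_eq_zero_of_differentiableOn_of_addHaar_eq_zero μ
    (fun x _ => (hX' x).differentiableAt.differentiableWithinAt) h0

theorem MeasureTheory.IsAddFundamentalDomain.setIntegral_abs_det_fderiv_smul_comp
    {G : AddSubgroup E} [Countable G] {s : Set E}
    (hs : IsAddFundamentalDomain G s μ) (hsm : MeasurableSet s)
    {X : E → E} {X' : E → E →L[ℝ] E} (hX' : ∀ x, HasFDerivAt X (X' x) x) (hX : Bijective X)
    (hXequiv : ∀ (g : G) (x : E), X (g + x) = g + X x)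
    {f : E → V} (hf : ∀ (g : G) (x : E), f (g + x) = f x) :
    ∫ x in s, |(X' x).det| • f (X x) ∂μ = ∫ y in s, f y ∂μ := by
  have hXs : IsAddFundamentalDomain G (X '' s) μ :=
    hs.image_of_equiv (Equiv.ofBijective X hX)
      (quasiMeasurePreserving_symm_ofBijective_of_hasFDerivAt hX' hX) (Equiv.refl G) hXequiv
  rw [← integral_image_eq_integral_abs_det_fderiv_smul μ hsm
    (fun x _ => (hX' x).hasFDerivWithinAt) hX.injective.injOn]
  exact hXs.setIntegral_eq hs hf

end ChangeOfVariables

namespace EuclideanSpace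

variable {ι : Type*}

theorem setOf_forall_mem_Icc_eq_preimage_ofLp (a b : ℝ) :
    {x : EuclideanSpace ℝ ι | ∀ i, x i ∈ Set.Icc a b} =
      WithLp.ofLp ⁻¹' Set.Icc (fun _ => a) (fun _ => b) := by
  ext x
  simp [Pi.le_def, forall_and]

theorem isCompact_setOf_forall_mem_Icc [Finite ι] (a b : ℝ) :
    IsCompact {x : EuclideanSpace ℝ ι | ∀ i, x i ∈ Set.Icc a b} := by
  rw [setOf_forall_mem_Icc_eq_preimage_ofLp]
  exact (PiLp.homeomorph 2 fun _ : ι => ℝ).isCompact_preimage.2 isCompact_Icc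

theorem fundamentalDomain_basisFun_ae_eq [Fintype ι] :
    ZSpan.fundamentalDomain (basisFun ι ℝ).toBasis =ᵐ[volume]
      {x : EuclideanSpace ℝ ι | ∀ i, x i ∈ Set.Icc (0 : ℝ) 1} := by
  have hfd : ZSpan.fundamentalDomain (basisFun ι ℝ).toBasis =
      WithLp.ofLp ⁻¹' Set.univ.pi fun _ => Set.Ico (0 : ℝ) 1 := by
    ext x
    simp [ZSpan.mem_fundamentalDomain]
  rw [hfd, setOf_forall_mem_Icc_eq_preimage_ofLp]
  exact (PiLp.volume_preserving_ofLp ι).quasiMeasurePreserving.preimage_ae_eq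
    Measure.univ_pi_Ico_ae_eq_Icc

theorem mem_span_basisFun_iff [Fintype ι] {x : EuclideanSpace ℝ ι} :
    x ∈ Submodule.span ℤ (Set.range (basisFun ι ℝ).toBasis) ↔
      ∃ k : ι → ℤ, x = WithLp.toLp 2 fun i => (k i : ℝ) := by
  rw [Module.Basis.mem_span_iff_repr_mem]
  constructor
  · intro h
    choose k hk using h
    exact ⟨k, by ext i; simpa using (hk i).symm⟩
  · rintro ⟨k, rfl⟩ i
    exact ⟨k i, by simp⟩

end EuclideanSpace

theorem setIntegral_Q_abs_det_fderiv_smul_comp {V : Type*} [NormedAddCommGroup V]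
    [NormedSpace ℝ V] {X : E2 → E2} (hX : Differentiable ℝ X) (hXbij : Bijective X)
    (hXequiv : ∀ (x : E2) (k : Fin 2 → ℤ), X (x + intVec k) = X x + intVec k)
    {f : E2 → V} (hf : ∀ (x : E2) (k : Fin 2 → ℤ), f (x + intVec k) = f x) :
    ∫ x in Q, |(fderiv ℝ X x).det| • f (X x) = ∫ y in Q, f y := by
  have hQ : ZSpan.fundamentalDomain (EuclideanSpace.basisFun (Fin 2) ℝ).toBasis =ᵐ[volume] Q :=
    EuclideanSpace.fundamentalDomain_basisFun_ae_eq
  -- instance search finds countability of the lattice only as a submodule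
  have : Countable (Submodule.span ℤ
      (Set.range (EuclideanSpace.basisFun (Fin 2) ℝ).toBasis)).toAddSubgroup :=
    inferInstanceAs (Countable (Submodule.span ℤ _))
  rw [← setIntegral_congr_set hQ, ← setIntegral_congr_set hQ]
  refine (ZSpan.isAddFundamentalDomain' _ volume).setIntegral_abs_det_fderiv_smul_comp
    (ZSpan.fundamentalDomain_measurableSet _) (fun x => (hX x).hasFDerivAt) hXbij
    (fun g x => ?_) (fun g x => ?_)
  all_goals obtain ⟨k, hk⟩ := EuclideanSpace.mem_span_basisFun_iff.1 g.2
  · rw [hk, add_comm, ← intVec, hXequiv, add_comm]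
  · rw [hk, add_comm, ← intVec, hf]

theorem half_sq_sub_mul_abs_mul_sq_le {a b d Λ : ℝ} (hd : |d| ≤ Λ) :
    1 / 2 * a ^ 2 - Λ / 2 * (|d| * b ^ 2) ≤ (a - b * d) * a := by
  nlinarith [sq_nonneg (a - b * d), sq_abs d,
    mul_le_mul_of_nonneg_right hd (mul_nonneg (abs_nonneg d) (sq_nonneg b))]

theorem characteristic_coercivity_bound_general
    (Λ : ℝ)
    (X : E2 → E2) (θ η : E2 → ℝ)
    (hX : ContDiff ℝ 1 X) (hXbij : Function.Bijective X)
    (hXequiv : ∀ (x : E2) (k : Fin 2 → ℤ), X (x + intVec k) = X x + intVec k)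
    (hδpos : ∀ x : E2, 0 < (fderiv ℝ X x).det)
    (hδub : ∀ x : E2, (fderiv ℝ X x).det ≤ Λ)
    (hθ : Continuous θ)
    (hθper : ∀ (x : E2) (k : Fin 2 → ℤ), θ (x + intVec k) = θ x)
    (hη : Continuous η) :
    ∫ x in Q, (η x - θ (X x) * (fderiv ℝ X x).det) * η x
      ≥ (1 / 2) * (∫ x in Q, η x ^ 2) - (Λ / 2) * ∫ y in Q, θ y ^ 2 := by
  set δ : E2 → ℝ := fun x => (fderiv ℝ X x).det
  have hδ : Continuous δ :=
    ContinuousLinearMap.continuous_det.comp (hX.continuous_fderiv one_ne_zero)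
  have hθX : Continuous (θ ∘ X) := hθ.comp hX.continuous
  have hQ : IsCompact Q := EuclideanSpace.isCompact_setOf_forall_mem_Icc 0 1
  have hη2 : IntegrableOn (fun x => 1 / 2 * η x ^ 2) Q :=
    ((hη.pow 2).const_mul _).continuousOn.integrableOn_compact hQ
  have hθX2 : IntegrableOn (fun x => Λ / 2 * (|δ x| * θ (X x) ^ 2)) Q :=
    ((hδ.abs.mul (hθX.pow 2)).const_mul _).continuousOn.integrableOn_compact hQ
  have hcov : ∫ x in Q, |δ x| * θ (X x) ^ 2 = ∫ y in Q, θ y ^ 2 := by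
    simpa only [smul_eq_mul] using setIntegral_Q_abs_det_fderiv_smul_comp
      (hX.differentiable one_ne_zero) hXbij hXequiv (f := fun y => θ y ^ 2) (by simp [hθper])
  calc (1 / 2) * (∫ x in Q, η x ^ 2) - (Λ / 2) * ∫ y in Q, θ y ^ 2
      = ∫ x in Q, (1 / 2 * η x ^ 2 - Λ / 2 * (|δ x| * θ (X x) ^ 2)) := by
        rw [integral_sub hη2 hθX2, integral_const_mul, integral_const_mul, hcov]
    _ ≤ ∫ x in Q, (η x - θ (X x) * δ x) * η x :=
        setIntegral_mono_on (hη2.sub hθX2)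
          (((hη.sub (hθX.mul hδ)).mul hη).continuousOn.integrableOn_compact hQ)
          hQ.isClosed.measurableSet fun x _ =>
            half_sq_sub_mul_abs_mul_sq_le ((abs_of_pos (hδpos x)).trans_le (hδub x))

/-- Coercivity bound: if `X` is a `ℤ²`-equivariant `C¹` diffeomorphism with positive Jacobian
determinant `δ ≤ Λ`, and `θ, η` are continuous and `ℤ²`-periodic, then
`∫_Q (η(x) − θ(X(x)) δ(x)) η(x) dx ≥ (1/2) ∫_Q η² − (Λ/2) ∫_Q θ²`. -/
theorem characteristic_coercivity_bound
    (Λ : ℝ) (hΛ : 0 < Λ)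
    (X : E2 → E2) (θ η : E2 → ℝ)
    (hX : ContDiff ℝ 1 X) (hXbij : Function.Bijective X)
    (hXequiv : ∀ (x : E2) (k : Fin 2 → ℤ), X (x + intVec k) = X x + intVec k)
    (hδpos : ∀ x : E2, 0 < (fderiv ℝ X x).det)
    (hδub : ∀ x : E2, (fderiv ℝ X x).det ≤ Λ)
    (hθ : Continuous θ)
    (hθper : ∀ (x : E2) (k : Fin 2 → ℤ), θ (x + intVec k) = θ x)
    (hη : Continuous η)
    (hηper : ∀ (x : E2) (k : Fin 2 → ℤ), η (x + intVec k) = η x) :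
    ∫ x in Q, (η x - θ (X x) * (fderiv ℝ X x).det) * η x
      ≥ (1 / 2) * (∫ x in Q, η x ^ 2) - (Λ / 2) * ∫ y in Q, θ y ^ 2 :=
  characteristic_coercivity_bound_general Λ X θ η hX hXbij hXequiv hδpos hδub hθ hθper hη
end
end

section
/- Let ρ : ℝ² × ℝ → ℝ be differentiable at (x, t) and p : ℝ² → ℝ² be differentiable at x. Then the function s ↦ ρ(x − s p(x), t − s) · det(I₂ − s Dp(x)) is differentiable at s = 0 with derivative equal to −( ∂_t ρ(x, t) + p(x)·∇ρ(x, t) + ρ(x, t)(div p)(x) ) = −( ∂_t ρ + div(ρ(·,t) p) )(x, t), where Dp(x) is the 2×2 Jacobian matrix of p at x, I₂ the 2×2 identity matrix, and div p = tr(Dp). -/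
/-!
The factor `ρ (x - s • p x, t - s)` is `ρ` along the line through `(x, t)` with direction
`-(p x, 1)`, so by the chain rule its derivative at `0` is `-Dρ(x, t) (p x, 1)`. The factor
`det (1 - s • Dp(x))` is a polynomial in `s` whose linear coefficient is `-tr Dp(x)`, since the
first-order term of `det (1 + s • M)` is `s • tr M`. At `s = 0` the determinant is `1`, so the
product rule gives the claim.
-/

noncomputable section

open Polynomial in
theorem Matrix.hasDerivAt_det_one_add_smul {𝕜 n : Type*} [NontriviallyNormedField 𝕜] [Fintype n]
    [DecidableEq n] (M : Matrix n n 𝕜) :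
    HasDerivAt (fun s : 𝕜 => (1 + s • M).det) M.trace 0 := by
  have hpoly : (fun s : 𝕜 => (1 + s • M).det) =
      fun s => (det (1 + (X : 𝕜[X]) • M.map C)).eval s := by
    ext s
    simp [eval_det, ← smul_eq_mul_diagonal]
  rw [hpoly, ← derivative_det_one_add_X_smul]
  exact Polynomial.hasDerivAt _ 0

theorem LinearMap.hasDerivAt_det_one_add_smul {𝕜 V : Type*} [NontriviallyNormedField 𝕜]
    [AddCommGroup V] [Module 𝕜 V] [FiniteDimensional 𝕜 V] (A : V →ₗ[𝕜] V) :
    HasDerivAt (fun s : 𝕜 => LinearMap.det (1 + s • A)) (LinearMap.trace 𝕜 V A) 0 := by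
  let b := Module.Free.chooseBasis 𝕜 V
  simp only [← LinearMap.det_toMatrix b, map_add, map_smul, LinearMap.toMatrix_one,
    LinearMap.trace_eq_matrix_trace 𝕜 b]
  exact (LinearMap.toMatrix b b A).hasDerivAt_det_one_add_smul

theorem ContinuousLinearMap.hasDerivAt_det_one_sub_smul {𝕜 V : Type*} [NontriviallyNormedField 𝕜]
    [AddCommGroup V] [TopologicalSpace V] [Module 𝕜 V] [FiniteDimensional 𝕜 V]
    [IsTopologicalAddGroup V] [ContinuousConstSMul 𝕜 V] (A : V →L[𝕜] V) :
    HasDerivAt (fun s : 𝕜 => ((1 : V →L[𝕜] V) - s • A).det)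
      (-LinearMap.trace 𝕜 V A) 0 := by
  have hcoe : ∀ s : 𝕜,
      ((1 : V →L[𝕜] V) - s • A).det = LinearMap.det (1 + s • -(A : V →ₗ[𝕜] V)) :=
    fun s => by rw [smul_neg, ← sub_eq_add_neg]; rfl
  simpa only [hcoe, map_neg] using (-(A : V →ₗ[𝕜] V)).hasDerivAt_det_one_add_smul

theorem HasFDerivAt.hasDerivAt_sub_smul {𝕜 E F : Type*} [NontriviallyNormedField 𝕜]
    [NormedAddCommGroup E] [NormedSpace 𝕜 E] [NormedAddCommGroup F] [NormedSpace 𝕜 F]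
    {f : E → F} {f' : E →L[𝕜] F} {z : E} (hf : HasFDerivAt f f' z) (w : E) :
    HasDerivAt (fun s : 𝕜 => f (z - s • w)) (-f' w) 0 := by
  have hline : HasDerivAt (fun s : 𝕜 => z - s • w) (-w) 0 := by
    simpa using ((hasDerivAt_id (0 : 𝕜)).smul_const w).const_sub z
  have h := hf.comp_hasDerivAt_of_eq 0 hline (by simp)
  rwa [map_neg] at h

theorem characteristic_consistency_derivative_general
    (ρ : E2 × ℝ → ℝ) (p : E2 → E2) (x : E2) (t : ℝ)
    (hρ : DifferentiableAt ℝ ρ (x, t)) :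
    HasDerivAt
      (fun s : ℝ => ρ (x - s • p x, t - s) * ((1 : E2 →L[ℝ] E2) - s • fderiv ℝ p x).det)
      (-(fderiv ℝ ρ (x, t) (0, 1) + fderiv ℝ ρ (x, t) (p x, 0)
          + ρ (x, t) * LinearMap.trace ℝ E2 (fderiv ℝ p x).toLinearMap))
      0 := by
  have hρ_char : HasDerivAt (fun s : ℝ => ρ (x - s • p x, t - s))
      (-(fderiv ℝ ρ (x, t) (0, 1) + fderiv ℝ ρ (x, t) (p x, 0))) 0 := by
    have h := hρ.hasFDerivAt.hasDerivAt_sub_smul (p x, (1 : ℝ))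
    rw [← map_add, Prod.mk_add_mk, zero_add, add_zero]
    simpa using h
  have hdet_zero : ((1 : E2 →L[ℝ] E2) - (0 : ℝ) • fderiv ℝ p x).det = 1 := by
    simp [ContinuousLinearMap.det]
  refine (hρ_char.mul (fderiv ℝ p x).hasDerivAt_det_one_sub_smul).congr_deriv ?_
  simp only [hdet_zero, zero_smul, sub_zero]
  ring

/-- First-order consistency of the modified characteristic approximation: if `ρ` is
differentiable at `(x,t)` and `p` at `x`, then `s ↦ ρ(x − s p(x), t − s) det(I − s Dp(x))`
is differentiable at `s = 0` with derivative
`−(∂_t ρ(x,t) + p(x)·∇ρ(x,t) + ρ(x,t) div p(x))`. -/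
theorem characteristic_consistency_derivative
    (ρ : E2 × ℝ → ℝ) (p : E2 → E2) (x : E2) (t : ℝ)
    (hρ : DifferentiableAt ℝ ρ (x, t))
    (hp : DifferentiableAt ℝ p x) :
    HasDerivAt
      (fun s : ℝ => ρ (x - s • p x, t - s) * ((1 : E2 →L[ℝ] E2) - s • fderiv ℝ p x).det)
      (-(fderiv ℝ ρ (x, t) (0, 1) + fderiv ℝ ρ (x, t) (p x, 0)
          + ρ (x, t) * LinearMap.trace ℝ E2 (fderiv ℝ p x).toLinearMap))
      0 :=
  characteristic_consistency_derivative_general ρ p x t hρ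
end
end
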